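/- In the convolution algebra R*, for 0 ≤ i,k ≤ mn-1 and 0 ≤ j,l ≤ n-1 one has: (overline{g^i x^j}) * (overline{g^k x^l}) = 0 if k ≢ i+j (mod mn) or l+j ≥ n, and (overline{g^i x^j}) * (overline{g^k x^l}) = binom(l+j, j)_q · overline{g^i x^{j+l}} otherwise, where binom(l+j,j)_q is the Gaussian q-binomial coefficient. -/

import Mathlib

open scoped TensorProduct

/-- The convolution product on the dual `R* = Hom_K(R, K)` of a coalgebra:
`(f * h)(a) = Σ f(a₍₁₎) h(a₍₂₎)`. -/
noncomputable def conv (K : Type*) {R : Type*} [CommRing K] [AddCommMonoid R]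
    [Module K R] [Coalgebra K R] (f h : R →ₗ[K] K) : R →ₗ[K] K :=
  LinearMap.mul' K K ∘ₗ TensorProduct.map f h ∘ₗ Coalgebra.comul

/-- The Gaussian `q`-binomial coefficient, defined by the `q`-Pascal recursion. -/
def qBinom {K : Type*} [Field K] (q : K) : ℕ → ℕ → K
  | _, 0 => 1
  | 0, _ + 1 => 0
  | c + 1, t + 1 => q ^ (t + 1) * qBinom q c (t + 1) + qBinom q c t

lemma qBinom_eq_zero_of_lt {K : Type*} [Field K] (q : K) :
    ∀ c t : ℕ, c < t → qBinom q c t = 0 := by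
  intro c
  induction c with
  | zero =>
    intro t ht
    cases t with
    | zero => omega
    | succ t => rfl
  | succ c ih =>
    intro t ht
    cases t with
    | zero => omega
    | succ t =>
      show q ^ (t + 1) * qBinom q c (t + 1) + qBinom q c t = 0
      rw [ih (t + 1) (by omega), ih t (by omega), mul_zero, zero_add]

lemma q_pow_comm {K S : Type*} [CommRing K] [Ring S] [Algebra K S] (q : K) (a b : S)
    (h : b * a = q • (a * b)) : ∀ t : ℕ, b * a ^ t = q ^ t • (a ^ t * b) := by
  intro t
  induction t with
  | zero => simp
  | succ t ih =>
    calc b * a ^ (t + 1) = (b * a ^ t) * a := by rw [pow_succ, mul_assoc]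
      _ = q ^ t • (a ^ t * (b * a)) := by rw [ih, smul_mul_assoc, mul_assoc]
      _ = q ^ t • (a ^ t * (q • (a * b))) := by rw [h]
      _ = q ^ (t + 1) • (a ^ (t + 1) * b) := by
          rw [mul_smul_comm, smul_smul, ← mul_assoc, ← pow_succ, ← pow_succ]

lemma q_add_pow {K S : Type*} [Field K] [Ring S] [Algebra K S] (q : K) (a b : S)
    (h : b * a = q • (a * b)) (c : ℕ) :
    (a + b) ^ c = ∑ t ∈ Finset.range (c + 1), qBinom q c t • (a ^ t * b ^ (c - t)) := by
  induction c with
  | zero => simp [qBinom]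
  | succ c ih =>
    have key : ∀ t ∈ Finset.range (c + 1),
        (a + b) * (qBinom q c t • (a ^ t * b ^ (c - t)))
          = qBinom q c t • (a ^ (t + 1) * b ^ (c - t))
            + (q ^ t * qBinom q c t) • (a ^ t * b ^ (c + 1 - t)) := by
      intro t ht
      rw [Finset.mem_range] at ht
      have h1 : c + 1 - t = (c - t) + 1 := by omega
      have h2 : b * (a ^ t * b ^ (c - t)) = q ^ t • (a ^ t * b ^ (c - t + 1)) := by
        rw [← mul_assoc, q_pow_comm q a b h t, smul_mul_assoc, mul_assoc, ← pow_succ']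
      rw [add_mul, mul_smul_comm, mul_smul_comm, h2, ← mul_assoc, ← pow_succ', h1, smul_smul,
        mul_comm (qBinom q c t) (q ^ t)]
    have hS2 : ∑ t ∈ Finset.range (c + 1), (q ^ t * qBinom q c t) • (a ^ t * b ^ (c + 1 - t))
        = (∑ t ∈ Finset.range (c + 1),
            (q ^ (t + 1) * qBinom q c (t + 1)) • (a ^ (t + 1) * b ^ (c - t)))
          + (1 : S) * b ^ (c + 1) := by
      rw [Finset.sum_range_succ' (fun t => (q ^ t * qBinom q c t) • (a ^ t * b ^ (c + 1 - t))) c]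
      congr 1
      · rw [Finset.sum_range_succ]
        rw [qBinom_eq_zero_of_lt q c (c + 1) (by omega)]
        simp
      · simp [qBinom]
    have hR : ∑ t ∈ Finset.range (c + 1 + 1), qBinom q (c + 1) t • (a ^ t * b ^ (c + 1 - t))
        = (∑ t ∈ Finset.range (c + 1),
            ((q ^ (t + 1) * qBinom q c (t + 1)) • (a ^ (t + 1) * b ^ (c - t))
              + qBinom q c t • (a ^ (t + 1) * b ^ (c - t)))) + (1 : S) * b ^ (c + 1) := by
      rw [Finset.sum_range_succ' (fun t => qBinom q (c + 1) t • (a ^ t * b ^ (c + 1 - t))) (c + 1)]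
      congr 1
      · apply Finset.sum_congr rfl
        intro t ht
        have h3 : c + 1 - (t + 1) = c - t := by omega
        rw [h3]
        show (q ^ (t + 1) * qBinom q c (t + 1) + qBinom q c t) • _ = _
        rw [add_smul]
      · show qBinom q (c + 1) 0 • (a ^ 0 * b ^ (c + 1)) = _
        simp [qBinom]
    rw [pow_succ', ih, Finset.mul_sum, Finset.sum_congr rfl key, Finset.sum_add_distrib,
      hR, Finset.sum_add_distrib, hS2]
    abel

/-- in the convolution algebra `R*`, with `overline{g^i x^j}` the dual
basis of the basis `{g^i x^j}`, one has
`overline{g^i x^j} * overline{g^k x^l} = 0` if `k ≢ i+j (mod mn)` or `l+j ≥ n`, and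
`overline{g^i x^j} * overline{g^k x^l} = binom(l+j, j)_q • overline{g^i x^{j+l}}`
otherwise. -/
theorem radford_dual_basis_mul (K : Type*) [Field K] [IsAlgClosed K]
    (m n : ℕ) (hm : 2 ≤ m) (hn : 1 ≤ n) (hchar : ¬ (ringChar K ∣ m * n))
    (q : K) (hq : IsPrimitiveRoot q n)
    (R : Type*) [Ring R] [HopfAlgebra K R] (g x : R)
    (hgo : g ^ (m * n) = 1) (hxn : x ^ n = g ^ n - 1) (hxg : x * g = q • (g * x))
    (B : Module.Basis (Fin (m * n) × Fin n) K R)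
    (hB : ∀ p : Fin (m * n) × Fin n, B p = g ^ (p.1 : ℕ) * x ^ (p.2 : ℕ))
    (hcg : Coalgebra.comul (R := K) g = g ⊗ₜ[K] g)
    (hcx : Coalgebra.comul (R := K) x = x ⊗ₜ[K] g + 1 ⊗ₜ[K] x)
    (heg : Coalgebra.counit (R := K) g = (1 : K))
    (hex : Coalgebra.counit (R := K) x = (0 : K))
    (hSg : HopfAlgebra.antipode (R := K) g = g ^ (m * n - 1))
    (hSx : HopfAlgebra.antipode (R := K) x = -(x * g ^ (m * n - 1))) :
    ∀ (i k : Fin (m * n)) (j l : Fin n),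
      ((¬ ((i : ℕ) + (j : ℕ)) % (m * n) = (k : ℕ) ∨ n ≤ (l : ℕ) + (j : ℕ)) →
        conv K (B.coord (i, j)) (B.coord (k, l)) = 0) ∧
      (∀ (_ : ((i : ℕ) + (j : ℕ)) % (m * n) = (k : ℕ)) (hl : (l : ℕ) + (j : ℕ) < n),
        conv K (B.coord (i, j)) (B.coord (k, l)) =
          qBinom q ((l : ℕ) + (j : ℕ)) (j : ℕ) •
            B.coord (i, ⟨(j : ℕ) + (l : ℕ), by omega⟩)) := by
  classical
  have hmn0 : 0 < m * n := Nat.mul_pos (by omega) (by omega)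
  have hgpow : ∀ s : ℕ, g ^ s = g ^ (s % (m * n)) := by
    intro s
    conv_lhs => rw [← Nat.div_add_mod s (m * n)]
    rw [pow_add, pow_mul, hgo, one_pow, one_mul]
  have hcomul_x_pow : ∀ b : ℕ, Coalgebra.comul (R := K) (x ^ b)
      = ∑ t ∈ Finset.range (b + 1),
          qBinom q b t • ((x ^ t) ⊗ₜ[K] (g ^ t * x ^ (b - t))) := by
    intro b
    have hcomm : ((1 : R) ⊗ₜ[K] x) * (x ⊗ₜ[K] g) = q • ((x ⊗ₜ[K] g) * ((1 : R) ⊗ₜ[K] x)) := by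
      rw [Algebra.TensorProduct.tmul_mul_tmul, Algebra.TensorProduct.tmul_mul_tmul,
        one_mul, mul_one, hxg, TensorProduct.tmul_smul]
    have h2 : Coalgebra.comul (R := K) (x ^ b) = (Coalgebra.comul (R := K) x) ^ b := by
      rw [← Bialgebra.comulAlgHom_apply K R, map_pow, Bialgebra.comulAlgHom_apply]
    rw [h2, hcx, q_add_pow q _ _ hcomm b]
    apply Finset.sum_congr rfl
    intro t ht
    congr 1
    rw [Algebra.TensorProduct.tmul_pow, Algebra.TensorProduct.tmul_pow,
      Algebra.TensorProduct.tmul_mul_tmul, one_pow, mul_one]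
  have hcomulB : ∀ (a : Fin (m * n)) (b : Fin n),
      Coalgebra.comul (R := K) (B (a, b)) = ∑ t ∈ Finset.range ((b : ℕ) + 1),
        qBinom q (b : ℕ) t •
          ((g ^ (a : ℕ) * x ^ t) ⊗ₜ[K]
            (g ^ (((a : ℕ) + t) % (m * n)) * x ^ ((b : ℕ) - t))) := by
    intro a b
    have hBab : B (a, b) = g ^ (a : ℕ) * x ^ (b : ℕ) := hB (a, b)
    rw [hBab, ← Bialgebra.comulAlgHom_apply K R, map_mul, map_pow,
      Bialgebra.comulAlgHom_apply, Bialgebra.comulAlgHom_apply, hcg,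
      hcomul_x_pow, Algebra.TensorProduct.tmul_pow, Finset.mul_sum]
    apply Finset.sum_congr rfl
    intro t ht
    rw [mul_smul_comm, Algebra.TensorProduct.tmul_mul_tmul, ← mul_assoc, ← pow_add,
      hgpow ((a : ℕ) + t)]
  have hconv : ∀ (f h' : R →ₗ[K] K) (a : Fin (m * n)) (b : Fin n),
      conv K f h' (B (a, b)) = ∑ t ∈ Finset.range ((b : ℕ) + 1),
        qBinom q (b : ℕ) t * (f (g ^ (a : ℕ) * x ^ t) *
          h' (g ^ (((a : ℕ) + t) % (m * n)) * x ^ ((b : ℕ) - t))) := by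
    intro f h' a b
    have hdef : conv K f h' (B (a, b))
        = LinearMap.mul' K K (TensorProduct.map f h' (Coalgebra.comul (R := K) (B (a, b)))) := rfl
    rw [hdef, hcomulB, map_sum, map_sum]
    apply Finset.sum_congr rfl
    intro t ht
    rw [map_smul, TensorProduct.map_tmul, map_smul, LinearMap.mul'_apply, smul_eq_mul]
  have hcoord : ∀ p p' : Fin (m * n) × Fin n, B.coord p (B p') = if p' = p then 1 else 0 := by
    intro p p'
    rw [Module.Basis.coord_apply, B.repr_self, Finsupp.single_apply]
  have master : ∀ (i k : Fin (m * n)) (j l : Fin n) (a : Fin (m * n)) (b : Fin n),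
      conv K (B.coord (i, j)) (B.coord (k, l)) (B (a, b)) =
        if (a : ℕ) = (i : ℕ) ∧ (b : ℕ) = (j : ℕ) + (l : ℕ)
            ∧ ((i : ℕ) + (j : ℕ)) % (m * n) = (k : ℕ)
        then qBinom q ((l : ℕ) + (j : ℕ)) (j : ℕ) else 0 := by
    intro i k j l a b
    rw [hconv]
    have step : ∀ t ∈ Finset.range ((b : ℕ) + 1),
        qBinom q (b : ℕ) t * (B.coord (i, j) (g ^ (a : ℕ) * x ^ t) *
          B.coord (k, l) (g ^ (((a : ℕ) + t) % (m * n)) * x ^ ((b : ℕ) - t)))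
        = if t = (j : ℕ) then
            (if (a : ℕ) = (i : ℕ) ∧ ((a : ℕ) + t) % (m * n) = (k : ℕ)
                ∧ (b : ℕ) - t = (l : ℕ)
             then qBinom q (b : ℕ) t else 0)
          else 0 := by
      intro t ht
      rw [Finset.mem_range] at ht
      have htn : t < n := by omega
      have hbtn : (b : ℕ) - t < n := by omega
      have hmod : ((a : ℕ) + t) % (m * n) < m * n := Nat.mod_lt _ hmn0
      have e1 : g ^ (a : ℕ) * x ^ t = B (a, ⟨t, htn⟩) := (hB (a, ⟨t, htn⟩)).symm
      have e2 : g ^ (((a : ℕ) + t) % (m * n)) * x ^ ((b : ℕ) - t)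
          = B (⟨((a : ℕ) + t) % (m * n), hmod⟩, ⟨(b : ℕ) - t, hbtn⟩) :=
        (hB (⟨((a : ℕ) + t) % (m * n), hmod⟩, ⟨(b : ℕ) - t, hbtn⟩)).symm
      rw [e1, e2, hcoord, hcoord]
      have c1 : ((a, (⟨t, htn⟩ : Fin n)) = (i, j)) ↔ ((a : ℕ) = (i : ℕ) ∧ t = (j : ℕ)) := by
        simp [Prod.ext_iff, Fin.ext_iff]
      have c2 : (((⟨((a : ℕ) + t) % (m * n), hmod⟩ : Fin (m * n)),
            (⟨(b : ℕ) - t, hbtn⟩ : Fin n)) = (k, l))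
          ↔ (((a : ℕ) + t) % (m * n) = (k : ℕ) ∧ (b : ℕ) - t = (l : ℕ)) := by
        simp [Prod.ext_iff, Fin.ext_iff]
      rw [if_congr c1 rfl rfl, if_congr c2 rfl rfl]
      by_cases h1 : (a : ℕ) = (i : ℕ) <;>
        by_cases h2 : t = (j : ℕ) <;>
          by_cases h3 : ((a : ℕ) + t) % (m * n) = (k : ℕ) <;>
            by_cases h4 : (b : ℕ) - t = (l : ℕ) <;>
              simp [h1, h2, h3, h4]
    rw [Finset.sum_congr rfl step, Finset.sum_ite_eq' (Finset.range ((b : ℕ) + 1)) ((j : ℕ))]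
    by_cases hC : (a : ℕ) = (i : ℕ) ∧ (b : ℕ) = (j : ℕ) + (l : ℕ)
        ∧ ((i : ℕ) + (j : ℕ)) % (m * n) = (k : ℕ)
    · obtain ⟨h1, h2, h3⟩ := hC
      rw [if_pos (show (j : ℕ) ∈ Finset.range ((b : ℕ) + 1) from Finset.mem_range.2 (by omega)),
        if_pos (show (a : ℕ) = (i : ℕ) ∧ ((a : ℕ) + (j : ℕ)) % (m * n) = (k : ℕ)
            ∧ (b : ℕ) - (j : ℕ) = (l : ℕ) from ⟨h1, by rw [h1]; exact h3, by omega⟩),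
        if_pos (show (a : ℕ) = (i : ℕ) ∧ (b : ℕ) = (j : ℕ) + (l : ℕ)
            ∧ ((i : ℕ) + (j : ℕ)) % (m * n) = (k : ℕ) from ⟨h1, h2, h3⟩)]
      have hb : (b : ℕ) = (l : ℕ) + (j : ℕ) := by omega
      rw [hb]
    · rw [if_neg hC]
      split_ifs with hmem hD
      · obtain ⟨d1, d2, d3⟩ := hD
        rw [Finset.mem_range] at hmem
        exact absurd ⟨d1, by omega, by rw [← d1]; exact d2⟩ hC
      · rfl
      · rfl
  intro i k j l
  constructor
  · intro hbad
    apply B.ext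
    rintro ⟨a, b⟩
    rw [master i k j l a b, LinearMap.zero_apply, if_neg]
    rintro ⟨h1, h2, h3⟩
    rcases hbad with hb | hb
    · exact hb h3
    · have := b.isLt
      omega
  · intro hk hl
    apply B.ext
    rintro ⟨a, b⟩
    rw [master i k j l a b, LinearMap.smul_apply, hcoord, smul_eq_mul]
    by_cases hab : (a : ℕ) = (i : ℕ) ∧ (b : ℕ) = (j : ℕ) + (l : ℕ)
    · rw [if_pos ⟨hab.1, hab.2, hk⟩, if_pos (by
        simp only [Prod.ext_iff, Fin.ext_iff]
        exact ⟨hab.1, hab.2⟩), mul_one]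
    · rw [if_neg (by tauto), if_neg (by
        simp only [Prod.ext_iff, Fin.ext_iff]
        tauto), mul_zero]
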